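/- Let s ≥ 1, 1 ≤ s' ≤ s, k ≥ 1 and D ≥ k. For r = 1, …, s' let Q^(r) = (Q^(r)_0, Q^(r)_1, …, Q^(r)_s) be a nonzero tuple of coefficient vectors with Q^(r)_0 ∈ F^D and Q^(r)_l ∈ F^(D−k+1) for 1 ≤ l ≤ s. With weight vector w = (0, k−1, …, k−1) ∈ ℕ^(s+1), define the w-weighted degree of Q^(r) as the maximum over components l = 0, 1, …, s of (deg Q^(r)_l + w_l), where deg of a coefficient vector is the largest index of a nonzero entry (−∞ for the zero vector), and define the leading position LP(Q^(r)) as the largest component index attaining this maximum. Suppose LP(Q^(r)) = j_r with j_1, …, j_(s') pairwise distinct elements of {1, …, s}. Then the number of tuples (f^(1), …, f^(s)) ∈ (F^k)^s satisfying Q^(r)_0 + Σ_(l=1)^s Q^(r)_l ∗ f^(l) = 0 (as coefficient sequences) for all r = 1, …, s' is at most q^(m·k·(s−s')). -/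

import Mathlib

/-!
Write `π r = j_r - 1`. Two solutions that agree outside the positions `π r` differ by a tuple
`h` supported on those positions which solves the homogeneous system, so it suffices to show
that such an `h` vanishes; then restriction to the other `s - s'` components is injective.
If `h ≠ 0`, pick `r` with `deg h_{π r} = d` maximal and, among those, `π r` smallest. With
`e = deg Q^(r)_{π r}`, the coefficient of degree `e + d` in the `r`-th equation receives
`Q^(r)_{π r, e} · σ^e (h_{π r, d}) ≠ 0` from `l = π r` and nothing from any other `l`: since
`π r` is the last component of maximal degree of `Q^(r)`, a tie `deg Q^(r)_l = e` forces
`l < π r`, while a tie `deg h_l = d` forces `l > π r`.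
-/

namespace Stmt10

/-- Coefficient vector regarded as a coefficient sequence supported in degrees `< d`. -/
def toSeq {F : Type} [Field F] {d : ℕ} (v : Fin d → F) : ℕ → F :=
  fun u => if h : u < d then v ⟨u, h⟩ else 0

/-- Skew product of coefficient sequences: `(g ∗ h)_w = Σ_{u+v=w} g_u · σ^u(h_v)`. -/
def skewMulSeq {F : Type} [Field F] (σ : F ≃+* F) (g h : ℕ → F) : ℕ → F :=
  fun w => ∑ u ∈ Finset.range (w + 1), g u * (⇑σ)^[u] (h (w - u))

/-- Degree of a coefficient vector: largest index of a nonzero entry (`⊥` = `−∞` for `0`). -/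
def degV {F : Type} [Field F] [DecidableEq F] {d : ℕ} (v : Fin d → F) : WithBot ℕ :=
  Finset.univ.sup fun u : Fin d => if v u = 0 then (⊥ : WithBot ℕ) else ((u : ℕ) : WithBot ℕ)

/-- `w`-weighted degree of the components of a tuple `(Q_0, Q_1, …, Q_s)` with
`w = (0, k−1, …, k−1)`: component `0` gets weight `0`, components `1, …, s` weight `k−1`. -/
def wdeg {F : Type} [Field F] [DecidableEq F] {D dk s : ℕ} (k : ℕ)
    (Q0 : Fin D → F) (Qp : Fin s → Fin dk → F) : Fin (s + 1) → WithBot ℕ :=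
  Fin.cases (degV Q0) fun l => degV (Qp l) + ((k - 1 : ℕ) : WithBot ℕ)

def IsLeadingPosition {ι α : Type*} [LE ι] [LE α] (d : ι → α) (j : ι) : Prop :=
  (∀ l, d l ≤ d j) ∧ ∀ l, d l = d j → l ≤ j

lemma IsLeadingPosition.succ {n : ℕ} {α : Type*} [LE α] {d : Fin (n + 1) → α} {j : Fin n}
    (h : IsLeadingPosition d j.succ) : IsLeadingPosition (fun l => d l.succ) j :=
  ⟨fun l => h.1 l.succ, fun l hl => Fin.succ_le_succ_iff.1 (h.2 l.succ hl)⟩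

lemma IsLeadingPosition.of_add_const {ι : Type*} [LE ι] {d : ι → WithBot ℕ} {j : ι}
    {c : ℕ} (h : IsLeadingPosition (fun l => d l + c) j) : IsLeadingPosition d j :=
  ⟨fun l => (WithBot.add_le_add_iff_right WithBot.coe_ne_bot).1 (h.1 l),
    fun l hl => h.2 l (congrArg (· + (c : WithBot ℕ)) hl)⟩

lemma withBot_add_lt_coe_add {a b : WithBot ℕ} {e d : ℕ} (ha : a ≤ e) (hb : b ≤ d)
    (hne : a ≠ e ∨ b ≠ d) : a + b < ((e + d : ℕ) : WithBot ℕ) := by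
  induction a using WithBot.recBotCoe with
  | bot => exact WithBot.bot_lt_coe _
  | coe a =>
    induction b using WithBot.recBotCoe with
    | bot => simp
    | coe b =>
      simp only [← Nat.cast_withBot, Nat.cast_le, Nat.cast_inj, ne_eq] at ha hb hne ⊢
      rw [← Nat.cast_add, Nat.cast_lt]
      omega

variable {F : Type} [Field F]

section SkewProduct

variable (σ : F ≃+* F)

lemma skewMulSeq_sub_right (g h₁ h₂ : ℕ → F) :
    skewMulSeq σ g (h₁ - h₂) = skewMulSeq σ g h₁ - skewMulSeq σ g h₂ := by
  funext w
  simp [skewMulSeq, iterate_map_sub, mul_sub, Finset.sum_sub_distrib]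

lemma toSeq_sub {d : ℕ} (a b : Fin d → F) : toSeq (a - b) = toSeq a - toSeq b := by
  funext u
  simp only [toSeq, Pi.sub_apply]
  split <;> simp

lemma sum_skewMulSeq_sub_eq_zero {ι : Type*} [Fintype ι] {k : ℕ} {a : ℕ → F}
    {b : ι → ℕ → F} {f g : ι → Fin k → F}
    (hf : a + ∑ l, skewMulSeq σ (b l) (toSeq (f l)) = 0)
    (hg : a + ∑ l, skewMulSeq σ (b l) (toSeq (g l)) = 0) :
    ∑ l, skewMulSeq σ (b l) (toSeq ((f - g) l)) = 0 := by
  simp only [Pi.sub_apply, toSeq_sub, skewMulSeq_sub_right, Finset.sum_sub_distrib]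
  rw [add_left_cancel (hf.trans hg.symm), sub_self]

lemma skewMulSeq_apply_add {g h : ℕ → F} {e d : ℕ}
    (hg : ∀ u, e < u → g u = 0) (hh : ∀ v, d < v → h v = 0) :
    skewMulSeq σ g h (e + d) = g e * (⇑σ)^[e] (h d) := by
  rw [skewMulSeq, Finset.sum_eq_single_of_mem e (Finset.mem_range.2 (by omega)),
    Nat.add_sub_cancel_left]
  intro u hu hue
  rcases lt_or_gt_of_ne hue with hlt | hgt
  · rw [hh _ (by rw [Finset.mem_range] at hu; omega), iterate_map_zero, mul_zero]
  · rw [hg u hgt, zero_mul]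

end SkewProduct

section Degree

variable [DecidableEq F] {d : ℕ}

lemma degV_eq_bot_iff {v : Fin d → F} : degV v = ⊥ ↔ v = 0 := by
  simp [degV, Finset.sup_eq_bot_iff, funext_iff]

lemma toSeq_eq_zero_of_degV_lt {v : Fin d → F} {u : ℕ} (hu : degV v < u) : toSeq v u = 0 := by
  rw [toSeq]
  split_ifs with hud
  · by_contra hv
    have hle := Finset.le_sup (Finset.mem_univ ⟨u, hud⟩) (f := fun i : Fin d =>
      if v i = 0 then (⊥ : WithBot ℕ) else ((i : ℕ) : WithBot ℕ))
    rw [if_neg hv] at hle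
    exact hle.not_gt hu
  · rfl

lemma exists_degV_eq_coe {v : Fin d → F} (hv : v ≠ 0) :
    ∃ e : ℕ, degV v = e ∧ toSeq v e ≠ 0 := by
  have hd : (Finset.univ : Finset (Fin d)).Nonempty :=
    Finset.univ_nonempty_iff.2 ⟨(Function.ne_iff.1 hv).choose⟩
  obtain ⟨i, -, hi⟩ := Finset.exists_mem_eq_sup _ hd fun u : Fin d =>
    if v u = 0 then (⊥ : WithBot ℕ) else ((u : ℕ) : WithBot ℕ)
  by_cases hvi : v i = 0
  · exact absurd (degV_eq_bot_iff.1 (by rw [degV, hi, if_pos hvi])) hv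
  · exact ⟨i, by rw [degV, hi, if_neg hvi], by simpa [toSeq] using hvi⟩

variable (σ : F ≃+* F) {d' : ℕ}

lemma skewMulSeq_toSeq_apply_degV_add {a : Fin d → F} {b : Fin d' → F} {e n : ℕ}
    (ha : degV a = e) (hb : degV b = n) :
    skewMulSeq σ (toSeq a) (toSeq b) (e + n) = toSeq a e * (⇑σ)^[e] (toSeq b n) :=
  skewMulSeq_apply_add σ (fun _ hu => toSeq_eq_zero_of_degV_lt (by rw [ha]; exact_mod_cast hu))
    (fun _ hv => toSeq_eq_zero_of_degV_lt (by rw [hb]; exact_mod_cast hv))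

lemma skewMulSeq_toSeq_apply_eq_zero {a : Fin d → F} {b : Fin d' → F} {N : ℕ}
    (hN : degV a + degV b < N) : skewMulSeq σ (toSeq a) (toSeq b) N = 0 := by
  refine Finset.sum_eq_zero fun u hu => ?_
  by_cases hau : degV a < u
  · rw [toSeq_eq_zero_of_degV_lt hau, zero_mul]
  · suffices hb : degV b < ((N - u : ℕ) : WithBot ℕ) by
      rw [toSeq_eq_zero_of_degV_lt hb, iterate_map_zero, mul_zero]
    by_cases hb : degV b = ⊥
    · rw [hb]
      exact WithBot.bot_lt_coe _
    obtain ⟨n, hn⟩ := WithBot.ne_bot_iff_exists.1 hb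
    obtain ⟨m, hm⟩ := WithBot.ne_bot_iff_exists.1 fun (ha : degV a = ⊥) =>
      hau (by rw [ha]; exact WithBot.bot_lt_coe u)
    rw [← hm, ← hn] at hN
    rw [← hm] at hau
    rw [← hn]
    simp only [← Nat.cast_withBot, ← Nat.cast_add, Nat.cast_lt] at hN hau ⊢
    omega

end Degree

variable [DecidableEq F]

lemma eq_zero_of_sum_skewMulSeq_eq_zero (σ : F ≃+* F) {ι : Type*} [Fintype ι] {s k dk : ℕ}
    {Q : ι → Fin s → Fin dk → F} {π : ι → Fin s} (hQ : ∀ r, Q r (π r) ≠ 0)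
    (hlead : ∀ r, IsLeadingPosition (fun l => degV (Q r l)) (π r))
    {h : Fin s → Fin k → F} (hsupp : ∀ l ∉ Set.range π, h l = 0)
    (hsol : ∀ r, ∑ l, skewMulSeq σ (toSeq (Q r l)) (toSeq (h l)) = 0) : h = 0 := by
  by_contra hne
  obtain ⟨l₀, hl₀⟩ := Function.ne_iff.1 hne
  obtain ⟨r₀, rfl⟩ : l₀ ∈ Set.range π := not_imp_comm.1 (hsupp l₀) hl₀
  obtain ⟨r, -, hr⟩ := Finset.univ.exists_max_image
    (fun r => toLex (degV (h (π r)), OrderDual.toDual (π r))) ⟨r₀, Finset.mem_univ _⟩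
  have hmax : ∀ r', degV (h (π r')) ≤ degV (h (π r)) ∧
      (degV (h (π r')) = degV (h (π r)) → π r ≤ π r') :=
    fun r' => Prod.Lex.toLex_le_toLex'.1 (hr r' (Finset.mem_univ _))
  have hhr : h (π r) ≠ 0 := fun h0 => hl₀ <| degV_eq_bot_iff.1 <|
    le_bot_iff.1 ((hmax r₀).1.trans (degV_eq_bot_iff.2 h0).le)
  obtain ⟨e, he, hQe⟩ := exists_degV_eq_coe (hQ r)
  obtain ⟨n, hn, hhn⟩ := exists_degV_eq_coe hhr
  have hcoeff := congrFun (hsol r) (e + n)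
  rw [Finset.sum_apply, Finset.sum_eq_single (π r), Pi.zero_apply,
    skewMulSeq_toSeq_apply_degV_add σ he hn] at hcoeff
  · exact mul_ne_zero hQe (fun h0 => hhn (σ.injective.iterate e
      (h0.trans (iterate_map_zero σ e).symm))) hcoeff
  · intro l _ hl
    refine skewMulSeq_toSeq_apply_eq_zero σ ?_
    by_cases hlπ : l ∈ Set.range π
    · obtain ⟨r', rfl⟩ := hlπ
      refine withBot_add_lt_coe_add (he ▸ (hlead r).1 _) (hn ▸ (hmax r').1) ?_
      by_contra! hties
      exact hl (le_antisymm ((hlead r).2 _ (hties.1.trans he.symm))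
        ((hmax r').2 (hties.2.trans hn.symm)))
    · rw [hsupp l hlπ, degV_eq_bot_iff.2 rfl, WithBot.add_bot]
      exact WithBot.bot_lt_coe _
  · simp

section WeightedDegree

variable {D dk s k : ℕ} {Q0 : Fin D → F} {Qp : Fin s → Fin dk → F} {j : Fin s}

lemma IsLeadingPosition.degV_of_wdeg (h : IsLeadingPosition (wdeg k Q0 Qp) j.succ) :
    IsLeadingPosition (fun l => degV (Qp l)) j :=
  h.succ.of_add_const

lemma IsLeadingPosition.ne_zero_of_wdeg (h : IsLeadingPosition (wdeg k Q0 Qp) j.succ)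
    (hnz : ¬(Q0 = 0 ∧ ∀ l, Qp l = 0)) : Qp j ≠ 0 := by
  intro hj
  have hbot : ∀ l, wdeg k Q0 Qp l = ⊥ := fun l => le_bot_iff.1 <| (h.1 l).trans_eq <| by
    simp [wdeg, degV_eq_bot_iff.2 hj]
  refine hnz ⟨degV_eq_bot_iff.1 (hbot 0), fun l => degV_eq_bot_iff.1 ?_⟩
  simpa [wdeg] using hbot l.succ

end WeightedDegree

lemma card_subtype_le_pow_of_eqOn_compl {ι α : Type*} [Fintype ι] [DecidableEq ι] [Fintype α]
    {P : (ι → α) → Prop} (J : Finset ι)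
    (hP : ∀ f g, P f → P g → (∀ l ∉ J, f l = g l) → f = g) :
    Nat.card {f // P f} ≤ Fintype.card α ^ (Fintype.card ι - J.card) := by
  have hinj : Function.Injective fun f : {f // P f} => fun l : ↥Jᶜ => f.1 l := by
    rintro ⟨f, hf⟩ ⟨g, hg⟩ hfg
    exact Subtype.ext (hP f g hf hg fun l hl => congrFun hfg ⟨l, Finset.mem_compl.2 hl⟩)
  calc Nat.card {f // P f} ≤ Nat.card (↥Jᶜ → α) := Nat.card_le_card_of_injective _ hinj
    _ = _ := by
      rw [Nat.card_eq_fintype_card, Fintype.card_fun, Fintype.card_coe, Finset.card_compl]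

theorem root_finding_count_le
    {K F : Type} [Field K] [Field F] [Algebra K F] [Fintype K] [Fintype F] [DecidableEq F]
    (σ : F ≃+* F)
    {q m : ℕ} (hq : Fintype.card K = q) (hm : Module.finrank K F = m)
    {s s' k D : ℕ}
    (Q0 : Fin s' → Fin D → F) (Qp : Fin s' → Fin s → Fin (D - k + 1) → F)
    (hnz : ∀ r : Fin s', ¬ (Q0 r = 0 ∧ ∀ l : Fin s, Qp r l = 0))
    (jm : Fin s' → Fin (s + 1))
    (hj0 : ∀ r, jm r ≠ 0)
    (hjinj : Function.Injective jm)
    (hLP : ∀ r : Fin s',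
      (∀ l : Fin (s + 1), wdeg k (Q0 r) (Qp r) l ≤ wdeg k (Q0 r) (Qp r) (jm r)) ∧
      (∀ l : Fin (s + 1), wdeg k (Q0 r) (Qp r) l = wdeg k (Q0 r) (Qp r) (jm r) → l ≤ jm r)) :
    Nat.card {f : Fin s → Fin k → F //
        ∀ r : Fin s',
          toSeq (Q0 r) + ∑ l : Fin s, skewMulSeq σ (toSeq (Qp r l)) (toSeq (f l))
            = (0 : ℕ → F)}
      ≤ q ^ (m * k * (s - s')) := by
  set π : Fin s' → Fin s := fun r => (jm r).pred (hj0 r)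
  have hjm : ∀ r, jm r = (π r).succ := fun r => (Fin.succ_pred _ _).symm
  have hπ : Function.Injective π := fun a b hab => hjinj (by rw [hjm a, hjm b, hab])
  have hlead : ∀ r, IsLeadingPosition (wdeg k (Q0 r) (Qp r)) (π r).succ :=
    fun r => hjm r ▸ hLP r
  have hcard : Fintype.card (Fin k → F) = q ^ (m * k) := by
    rw [Fintype.card_fun, Module.card_eq_pow_finrank (K := K), hq, hm, Fintype.card_fin, pow_mul]
  calc _ ≤ Fintype.card (Fin k → F) ^ (Fintype.card (Fin s) - (Finset.univ.image π).card) := by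
        refine card_subtype_le_pow_of_eqOn_compl _ fun f g hf hg hfg => sub_eq_zero.1 ?_
        refine eq_zero_of_sum_skewMulSeq_eq_zero σ (fun r => (hlead r).ne_zero_of_wdeg (hnz r))
          (fun r => (hlead r).degV_of_wdeg) (fun l hl => ?_)
          fun r => sum_skewMulSeq_sub_eq_zero σ (hf r) (hg r)
        rw [Pi.sub_apply, hfg l (by simpa using hl), sub_self]
    _ = q ^ (m * k * (s - s')) := by
      rw [hcard, Finset.card_image_of_injective _ hπ, Finset.card_univ, Fintype.card_fin,
        Fintype.card_fin, ← pow_mul]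

end Stmt10
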